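/- arXiv:2308.00416 — 5 statements merged into one kernel-verified Lean document; each statement's English description precedes it below -/
import Mathlib

section
/- Let p₀ : ℝ → ℝ be bounded and measurable and σ > 0. Define g(t,ξ) = ((p₀(ξ) + √σ p₀(-√σ ξ))/(1+√σ)) · e^{-ξ²/(4t)}/√(πt). Then h(t) = ∫₀^∞ g(t,ξ) dξ is continuously differentiable on (0,∞), and h'(t) = ∫₀^∞ ((p₀(ξ) + √σ p₀(-√σ ξ))/(1+√σ)) · (ξ²/(4t²) - 1/(2t)) · e^{-ξ²/(4t)}/√(πt) dξ. -/
/-!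
Differentiation under the integral sign. For `t` in `(t₀/2, 2t₀)` the `t`-derivative
`(ξ²/4t² - 1/2t) e^{-ξ²/4t}/√(πt)` of the kernel is bounded by the integrable majorant
`(ξ²/t₀² + 1/t₀) e^{-ξ²/8t₀}/√(πt₀/2)`. The weight `(p₀(ξ) + √σ p₀(-√σ ξ))/(1+√σ)` is an
average of values of `p₀`, hence bounded by `M`, so `M` times the majorant dominates the
differentiated integrand; this gives the derivative and, by dominated convergence, its
continuity.
-/

open Real MeasureTheory Set Filter Topology

namespace HalfLineHeat

/-- Twice the Gaussian heat kernel: the heat kernel of the half-line with Neumann condition. -/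
noncomputable def kernel (t ξ : ℝ) : ℝ := exp (-ξ ^ 2 / (4 * t)) / sqrt (π * t)

noncomputable def kernelDeriv (t ξ : ℝ) : ℝ := (ξ ^ 2 / (4 * t ^ 2) - 1 / (2 * t)) * kernel t ξ

noncomputable def derivMajorant (a b ξ : ℝ) : ℝ :=
  (ξ ^ 2 / (4 * a ^ 2) + 1 / (2 * a)) * (exp (-ξ ^ 2 / (4 * b)) / sqrt (π * a))

theorem continuous_kernel (t : ℝ) : Continuous (kernel t) := by
  unfold kernel; fun_prop

theorem continuous_kernelDeriv (t : ℝ) : Continuous (kernelDeriv t) := by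
  unfold kernelDeriv kernel; fun_prop

theorem continuousAt_kernelDeriv (ξ : ℝ) {t : ℝ} (ht : 0 < t) :
    ContinuousAt (kernelDeriv · ξ) t := by
  unfold kernelDeriv kernel
  fun_prop (disch := positivity)

theorem hasDerivAt_kernel (ξ : ℝ) {t : ℝ} (ht : 0 < t) :
    HasDerivAt (kernel · ξ) (kernelDeriv t ξ) t := by
  have hπt : 0 < π * t := by positivity
  have hexponent := (hasDerivAt_const t (-ξ ^ 2)).fun_div ((hasDerivAt_id' t).const_mul 4)
    (by positivity : 4 * t ≠ 0)
  have hsqrt := ((hasDerivAt_id' t).const_mul π).sqrt hπt.ne'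
  refine (hexponent.exp.div hsqrt (sqrt_pos.mpr hπt).ne').congr_deriv ?_
  simp only [kernelDeriv, kernel]
  field_simp
  rw [mul_comm t π]
  linear_combination (4 * t) * sq_sqrt hπt.le

theorem integrable_kernel {t : ℝ} (ht : 0 < t) : Integrable (kernel t) := by
  have := (integrable_exp_neg_mul_sq (by positivity : 0 < 1 / (4 * t))).div_const (sqrt (π * t))
  convert this using 2 with ξ
  unfold kernel; ring_nf

theorem integrable_derivMajorant {a b : ℝ} (hb : 0 < b) : Integrable (derivMajorant a b) := by
  have hb' : 0 < 1 / (4 * b) := by positivity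
  have hmoment : Integrable (fun ξ : ℝ => ξ ^ 2 * exp (-(1 / (4 * b)) * ξ ^ 2)) := by
    simpa using integrable_rpow_mul_exp_neg_mul_sq hb' (show (-1 : ℝ) < 2 by norm_num)
  have hgauss := integrable_exp_neg_mul_sq hb'
  convert ((hmoment.const_mul (1 / (4 * a ^ 2))).add (hgauss.const_mul (1 / (2 * a)))).div_const
    (sqrt (π * a)) using 2 with ξ
  simp only [derivMajorant, Pi.add_apply]
  ring_nf

theorem abs_kernelDeriv_le_derivMajorant {a b t : ℝ} (ξ : ℝ) (ha : 0 < a) (hat : a ≤ t)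
    (htb : t ≤ b) : |kernelDeriv t ξ| ≤ derivMajorant a b ξ := by
  have ht : 0 < t := ha.trans_le hat
  have hpoly : |ξ ^ 2 / (4 * t ^ 2) - 1 / (2 * t)| ≤ ξ ^ 2 / (4 * a ^ 2) + 1 / (2 * a) := by
    refine (abs_sub _ _).trans ?_
    rw [abs_of_nonneg (by positivity), abs_of_nonneg (by positivity)]
    gcongr
  have hgauss : |kernel t ξ| ≤ exp (-ξ ^ 2 / (4 * b)) / sqrt (π * a) := by
    rw [kernel, abs_of_pos (by positivity)]
    gcongr exp ?_ / ?_
    · rw [neg_div, neg_div, neg_le_neg_iff]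
      gcongr
    · gcongr
  rw [kernelDeriv, abs_mul]
  exact mul_le_mul hpoly hgauss (abs_nonneg _) (by positivity)

theorem norm_mul_kernelDeriv_le_derivMajorant {q : ℝ → ℝ} {M a b τ : ℝ}
    (hq : ∀ ξ, |q ξ| ≤ M) (ha : 0 < a) (hτ : τ ∈ Icc a b) (ξ : ℝ) :
    ‖q ξ * kernelDeriv τ ξ‖ ≤ M * derivMajorant a b ξ := by
  rw [norm_mul, norm_eq_abs, norm_eq_abs]
  exact mul_le_mul (hq ξ) (abs_kernelDeriv_le_derivMajorant ξ ha hτ.1 hτ.2) (abs_nonneg _)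
    ((abs_nonneg _).trans (hq ξ))

variable {q : ℝ → ℝ} {M : ℝ} {s : Set ℝ}

theorem hasDerivAt_integral_mul_kernel
    (hq_meas : AEStronglyMeasurable q (volume.restrict s)) (hq : ∀ ξ, |q ξ| ≤ M) {t : ℝ} (ht : 0 < t) :
    HasDerivAt (fun τ => ∫ ξ in s, q ξ * kernel τ ξ) (∫ ξ in s, q ξ * kernelDeriv t ξ) t := by
  have hU : Ioo (t / 2) (2 * t) ∈ 𝓝 t := Ioo_mem_nhds (by linarith) (by linarith)
  have hint : IntegrableOn (fun ξ => q ξ * kernel t ξ) s :=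
    (integrable_kernel ht).integrableOn.bdd_mul hq_meas
      (ae_of_all _ fun ξ => (norm_eq_abs _).trans_le (hq ξ))
  refine (hasDerivAt_integral_of_dominated_loc_of_deriv_le hU
    (.of_forall fun τ => hq_meas.mul (continuous_kernel τ).aestronglyMeasurable) hint
    (hq_meas.mul (continuous_kernelDeriv t).aestronglyMeasurable)
    (ae_of_all _ fun ξ τ hτ =>
      norm_mul_kernelDeriv_le_derivMajorant hq (half_pos ht) (Ioo_subset_Icc_self hτ) ξ)
    ((integrable_derivMajorant (by positivity)).const_mul M).integrableOn
    (ae_of_all _ fun ξ τ hτ =>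
      (hasDerivAt_kernel ξ ((half_pos ht).trans hτ.1)).const_mul (q ξ))).2

theorem continuousOn_integral_mul_kernelDeriv
    (hq_meas : AEStronglyMeasurable q (volume.restrict s)) (hq : ∀ ξ, |q ξ| ≤ M) :
    ContinuousOn (fun τ => ∫ ξ in s, q ξ * kernelDeriv τ ξ) (Ioi 0) := by
  intro t (ht : 0 < t)
  have hU : Ioo (t / 2) (2 * t) ∈ 𝓝 t := Ioo_mem_nhds (by linarith) (by linarith)
  refine (continuousAt_of_dominated
    (.of_forall fun τ => hq_meas.mul (continuous_kernelDeriv τ).aestronglyMeasurable)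
    (eventually_of_mem hU fun τ hτ => ae_of_all _
      (norm_mul_kernelDeriv_le_derivMajorant hq (half_pos ht) (Ioo_subset_Icc_self hτ)))
    ((integrable_derivMajorant (by positivity)).const_mul M).integrableOn
    (ae_of_all _ fun ξ => continuousAt_const.mul (continuousAt_kernelDeriv ξ ht))
    ).continuousWithinAt

end HalfLineHeat

theorem abs_add_mul_div_one_add_le {x y c M : ℝ} (hx : |x| ≤ M) (hy : |y| ≤ M) (hc : 0 ≤ c) :
    |(x + c * y) / (1 + c)| ≤ M := by
  rw [abs_div, abs_of_pos (by positivity : 0 < 1 + c), div_le_iff₀ (by positivity)]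
  calc |x + c * y| ≤ |x| + c * |y| := by
        simpa only [abs_mul, abs_of_nonneg hc] using abs_add_le x (c * y)
    _ ≤ M + c * M := by gcongr
    _ = M * (1 + c) := by ring

open HalfLineHeat in
theorem stmt1_general (p0 : ℝ → ℝ) (hm : Measurable p0) (M : ℝ) (hM : ∀ x, |p0 x| ≤ M)
    (σ : ℝ)
    (h : ℝ → ℝ)
    (hh : ∀ t, h t = ∫ ξ in Set.Ioi (0:ℝ),
        ((p0 ξ + Real.sqrt σ * p0 (-Real.sqrt σ * ξ)) / (1 + Real.sqrt σ)) *
          (Real.exp (-ξ ^ 2 / (4 * t)) / Real.sqrt (π * t)))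
    (F : ℝ → ℝ)
    (hF : ∀ t, F t = ∫ ξ in Set.Ioi (0:ℝ),
        ((p0 ξ + Real.sqrt σ * p0 (-Real.sqrt σ * ξ)) / (1 + Real.sqrt σ)) *
          ((ξ ^ 2 / (4 * t ^ 2) - 1 / (2 * t)) * (Real.exp (-ξ ^ 2 / (4 * t)) / Real.sqrt (π * t)))) :
    (∀ t ∈ Set.Ioi (0:ℝ), HasDerivAt h (F t) t) ∧ ContinuousOn F (Set.Ioi 0) := by
  set q : ℝ → ℝ := fun ξ => (p0 ξ + sqrt σ * p0 (-sqrt σ * ξ)) / (1 + sqrt σ)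
  have hq_meas : Measurable q := by fun_prop
  have hq : ∀ ξ, |q ξ| ≤ M := fun ξ => abs_add_mul_div_one_add_le (hM _) (hM _) (sqrt_nonneg σ)
  obtain rfl : h = fun t => ∫ ξ in Ioi 0, q ξ * kernel t ξ := funext hh
  obtain rfl : F = fun t => ∫ ξ in Ioi 0, q ξ * kernelDeriv t ξ := funext hF
  exact ⟨fun t ht => hasDerivAt_integral_mul_kernel hq_meas.aestronglyMeasurable hq ht,
    continuousOn_integral_mul_kernelDeriv hq_meas.aestronglyMeasurable hq⟩

theorem stmt1 (p0 : ℝ → ℝ) (hm : Measurable p0) (M : ℝ) (hM : ∀ x, |p0 x| ≤ M)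
    (σ : ℝ) (hσ : 0 < σ)
    (h : ℝ → ℝ)
    (hh : ∀ t, h t = ∫ ξ in Set.Ioi (0:ℝ),
        ((p0 ξ + Real.sqrt σ * p0 (-Real.sqrt σ * ξ)) / (1 + Real.sqrt σ)) *
          (Real.exp (-ξ ^ 2 / (4 * t)) / Real.sqrt (π * t)))
    (F : ℝ → ℝ)
    (hF : ∀ t, F t = ∫ ξ in Set.Ioi (0:ℝ),
        ((p0 ξ + Real.sqrt σ * p0 (-Real.sqrt σ * ξ)) / (1 + Real.sqrt σ)) *
          ((ξ ^ 2 / (4 * t ^ 2) - 1 / (2 * t)) * (Real.exp (-ξ ^ 2 / (4 * t)) / Real.sqrt (π * t)))) :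
    (∀ t ∈ Set.Ioi (0:ℝ), HasDerivAt h (F t) t) ∧ ContinuousOn F (Set.Ioi 0) :=
  stmt1_general p0 hm M hM σ h hh F hF
end

section
/- For t > 0, x₀ > 0, and σ > 0, the fundamental solution p(t,y) = (1/(2√(πt))) e^{-(y-x₀)²/(4t)} + ((1-√σ)/(2(1+√σ)))(1/√(πt)) e^{-(y+x₀)²/(4t)} for y > 0 and p(t,y) = (1/((1+√σ)√(πt))) e^{-(x₀ - y/√σ)²/(4t)} for y < 0 satisfies the flux matching condition σ · ∂_y p(t, 0⁻) = ∂_y p(t, 0⁺). -/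
/-!
At `y = 0` both one-sided derivatives are `e^{-x₀²/(4t)} x₀ / (2 t √(π t))` times a coefficient:
`σ / ((1 + √σ) √σ)` from the transmitted Gaussian on the left, and `1/2 - (1 - √σ) / (2 (1 + √σ))`
from the direct and reflected Gaussians on the right. Since `σ = (√σ)²`, both equal `√σ / (1 + √σ)`.
-/

open Real

theorem hasDerivAt_exp_neg_sq_div {u : ℝ → ℝ} {u' y : ℝ} (c : ℝ) (hu : HasDerivAt u u' y) :
    HasDerivAt (fun y => exp (-u y ^ 2 / c)) (exp (-u y ^ 2 / c) * (-(2 * u y * u') / c)) y := by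
  convert ((hu.fun_pow 2).fun_neg.div_const c).exp using 1
  ring

theorem div_one_add_sqrt_div_sqrt_eq_half_sub {σ : ℝ} (hσ : 0 < σ) :
    σ / (1 + √σ) / √σ = 1 / 2 - (1 - √σ) / (2 * (1 + √σ)) := by
  have hs : 0 < √σ := sqrt_pos.2 hσ
  nth_rewrite 1 [← sq_sqrt hσ.le]
  field_simp
  ring

theorem stmt3_general (t x₀ σ : ℝ) (hσ : 0 < σ) :
    σ * deriv (fun y : ℝ =>
        (1 / ((1 + Real.sqrt σ) * Real.sqrt (π * t))) *
          Real.exp (-(x₀ - y / Real.sqrt σ) ^ 2 / (4 * t))) 0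
      = deriv (fun y : ℝ =>
        (1 / (2 * Real.sqrt (π * t))) * Real.exp (-(y - x₀) ^ 2 / (4 * t)) +
          ((1 - Real.sqrt σ) / (2 * (1 + Real.sqrt σ))) * (1 / Real.sqrt (π * t)) *
            Real.exp (-(y + x₀) ^ 2 / (4 * t))) 0 := by
  have hleft := (hasDerivAt_exp_neg_sq_div (4 * t)
    (((hasDerivAt_id' (0 : ℝ)).div_const √σ).const_sub x₀)).const_mul
      (1 / ((1 + √σ) * √(π * t)))
  have hright := ((hasDerivAt_exp_neg_sq_div (4 * t)
    ((hasDerivAt_id' (0 : ℝ)).sub_const x₀)).const_mul (1 / (2 * √(π * t)))).fun_add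
      ((hasDerivAt_exp_neg_sq_div (4 * t) ((hasDerivAt_id' (0 : ℝ)).add_const x₀)).const_mul
        ((1 - √σ) / (2 * (1 + √σ)) * (1 / √(π * t))))
  rw [hleft.deriv, hright.deriv]
  simp only [zero_div, sub_zero, zero_sub, zero_add, neg_sq, one_div, mul_inv]
  linear_combination (exp (-x₀ ^ 2 / (4 * t)) * x₀ / (2 * t * √(π * t))) *
    div_one_add_sqrt_div_sqrt_eq_half_sub hσ

theorem stmt3 (t x₀ σ : ℝ) (ht : 0 < t) (hx₀ : 0 < x₀) (hσ : 0 < σ) :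
    σ * deriv (fun y : ℝ =>
        (1 / ((1 + Real.sqrt σ) * Real.sqrt (π * t))) *
          Real.exp (-(x₀ - y / Real.sqrt σ) ^ 2 / (4 * t))) 0
      = deriv (fun y : ℝ =>
        (1 / (2 * Real.sqrt (π * t))) * Real.exp (-(y - x₀) ^ 2 / (4 * t)) +
          ((1 - Real.sqrt σ) / (2 * (1 + Real.sqrt σ))) * (1 / Real.sqrt (π * t)) *
            Real.exp (-(y + x₀) ^ 2 / (4 * t))) 0 :=
  stmt3_general t x₀ σ hσ
end

section
/- For t > 0 and bounded measurable φ : (0,∞) → ℝ, the Dirichlet heat kernel on the half line, Φ(t,x,ξ) = (1/(2√(πt)))(e^{-(x-ξ)²/(4t)} - e^{-(x+ξ)²/(4t)}), satisfies lim_{x→0⁺} ∂_x ∫₀^∞ φ(ξ) Φ(t,x,ξ) dξ = ∫₀^∞ φ(ξ) · (ξ/(2√(πt³))) e^{-ξ²/(4t)} dξ. -/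
open Real MeasureTheory Filter Topology

/-!
For `|x| ≤ R` the derivative `∂ₓΦ(t, x, ξ)` combines the two terms `u/(2t) · e^{-u²/4t}`,
`u = x ∓ ξ`, each bounded by `C e^{-ξ²/16t}`: split `e^{-u²/4t} = e^{-u²/8t} e^{-u²/8t}`, use
`|u| e^{-u²/8t} ≤ √(8t)` on one factor and `(x - ξ)² ≥ ξ²/2 - x²` on the other. This integrable
majorant, times the bound on `φ`, lets us differentiate under the integral sign near `x = 0` and
then pass to the limit `x → 0` by dominated convergence; at `x = 0` the two terms add up to
`ξ/(2√(πt³)) e^{-ξ²/4t}`.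
-/

section DerivIntegral

variable {α : Type*} [MeasurableSpace α] {μ : Measure α} {𝕜 : Type*} [RCLike 𝕜] {E : Type*}
  [NormedAddCommGroup E] [NormedSpace ℝ E] [NormedSpace 𝕜 E]

theorem tendsto_deriv_integral_of_dominated {F F' : 𝕜 → α → E} {x₀ : 𝕜} {bound : α → ℝ}
    {s : Set 𝕜} (hs : s ∈ 𝓝 x₀)
    (hF_meas : ∀ᶠ x in 𝓝 x₀, AEStronglyMeasurable (F x) μ)
    (hF_int : ∀ᶠ x in 𝓝 x₀, Integrable (F x) μ)
    (hF'_meas : ∀ᶠ x in 𝓝 x₀, AEStronglyMeasurable (F' x) μ)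
    (h_bound : ∀ᵐ a ∂μ, ∀ x ∈ s, ‖F' x a‖ ≤ bound a) (bound_integrable : Integrable bound μ)
    (h_diff : ∀ᵐ a ∂μ, ∀ x ∈ s, HasDerivAt (F · a) (F' x a) x)
    (h_cont : ∀ᵐ a ∂μ, ContinuousAt (F' · a) x₀) :
    Tendsto (fun x ↦ deriv (fun x' ↦ ∫ a, F x' a ∂μ) x) (𝓝 x₀) (𝓝 (∫ a, F' x₀ a ∂μ)) := by
  have h_deriv : ∀ᶠ x in 𝓝 x₀,
      deriv (fun x' ↦ ∫ a, F x' a ∂μ) x = ∫ a, F' x a ∂μ := by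
    filter_upwards [eventually_eventually_nhds.2 hF_meas, hF_int, hF'_meas,
      eventually_mem_nhds_iff.2 hs] with x hx_meas hx_int hx'_meas hx_s
    exact (hasDerivAt_integral_of_dominated_loc_of_deriv_le hx_s hx_meas hx_int hx'_meas
      h_bound bound_integrable h_diff).2.deriv
  have h_cont_integral : ContinuousAt (fun x ↦ ∫ a, F' x a ∂μ) x₀ :=
    continuousAt_of_dominated hF'_meas
      (by filter_upwards [hs] with x hx using h_bound.mono fun a ha ↦ ha x hx)
      bound_integrable h_cont
  exact h_cont_integral.tendsto.congr' (h_deriv.mono fun x hx ↦ hx.symm)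

end DerivIntegral

lemma abs_mul_exp_neg_sq_div_le {c : ℝ} (hc : 0 < c) (u : ℝ) :
    |u| * exp (-u ^ 2 / c) ≤ √c := by
  have h_poly : |u| ≤ √c * (u ^ 2 / c + 1) := by
    rw [mul_add, mul_one, ← mul_div_assoc, div_add' _ _ _ hc.ne', le_div_iff₀ hc]
    nlinarith [mul_nonneg (sqrt_nonneg c) (sq_nonneg (√c - |u|)), sq_abs u,
      sq_sqrt hc.le, sqrt_nonneg c, abs_nonneg u]
  calc |u| * exp (-u ^ 2 / c) ≤ √c * exp (u ^ 2 / c) * exp (-u ^ 2 / c) := by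
        gcongr
        exact h_poly.trans (mul_le_mul_of_nonneg_left (add_one_le_exp _) (sqrt_nonneg c))
    _ = √c := by rw [mul_assoc, ← exp_add, neg_div, add_neg_cancel, exp_zero, mul_one]

lemma exp_neg_sub_sq_div_le {c : ℝ} (hc : 0 < c) (x ξ : ℝ) :
    exp (-(x - ξ) ^ 2 / c) ≤ exp (x ^ 2 / c) * exp (-ξ ^ 2 / (2 * c)) := by
  rw [← exp_add, exp_le_exp, ← sub_nonneg]
  have : x ^ 2 / c + -ξ ^ 2 / (2 * c) - -(x - ξ) ^ 2 / c = (2 * x - ξ) ^ 2 / (2 * c) := by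
    field_simp
    ring
  rw [this]
  positivity

lemma integrable_exp_neg_sq_div {c : ℝ} (hc : 0 < c) :
    Integrable (fun u : ℝ ↦ exp (-u ^ 2 / c)) := by
  convert integrable_exp_neg_mul_sq (inv_pos.2 hc) using 3 with u
  ring

noncomputable section DirichletHeatKernel

def gauss (t u : ℝ) : ℝ := exp (-u ^ 2 / (4 * t))

def gaussDeriv (t u : ℝ) : ℝ := -u / (2 * t) * gauss t u

@[fun_prop]
lemma continuous_gauss (t : ℝ) : Continuous (gauss t) := by
  unfold gauss
  fun_prop

@[fun_prop]
lemma continuous_gaussDeriv (t : ℝ) : Continuous (gaussDeriv t) := by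
  unfold gaussDeriv
  fun_prop

lemma hasDerivAt_gauss (t u : ℝ) : HasDerivAt (gauss t) (gaussDeriv t u) u := by
  have h_exponent : HasDerivAt (fun v ↦ -v ^ 2 / (4 * t)) (-u / (2 * t)) u :=
    (((hasDerivAt_id u).pow 2).neg.div_const (4 * t)).congr_deriv (by simp only [id_eq]; ring)
  exact h_exponent.exp.congr_deriv (mul_comm _ _)

lemma exists_abs_gaussDeriv_sub_le {t : ℝ} (ht : 0 < t) (R : ℝ) :
    ∃ C, ∀ x, |x| ≤ R → ∀ ξ, |gaussDeriv t (x - ξ)| ≤ C * exp (-ξ ^ 2 / (16 * t)) := by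
  refine ⟨√(8 * t) / (2 * t) * exp (R ^ 2 / (8 * t)), fun x hx ξ ↦ ?_⟩
  have hx2 : x ^ 2 ≤ R ^ 2 := sq_le_sq' (abs_le.1 hx).1 (abs_le.1 hx).2
  have h_split : gauss t (x - ξ) = exp (-(x - ξ) ^ 2 / (8 * t)) * exp (-(x - ξ) ^ 2 / (8 * t)) := by
    rw [gauss, ← exp_add]
    ring_nf
  calc |gaussDeriv t (x - ξ)|
      = |x - ξ| * exp (-(x - ξ) ^ 2 / (8 * t)) / (2 * t) * exp (-(x - ξ) ^ 2 / (8 * t)) := by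
        rw [gaussDeriv, h_split, abs_mul, abs_div, abs_neg, abs_of_pos (by positivity : 0 < 2 * t),
          abs_of_pos (mul_pos (exp_pos _) (exp_pos _))]
        ring
    _ ≤ √(8 * t) / (2 * t) * (exp (x ^ 2 / (8 * t)) * exp (-ξ ^ 2 / (2 * (8 * t)))) := by
        gcongr
        · exact abs_mul_exp_neg_sq_div_le (by positivity) _
        · exact exp_neg_sub_sq_div_le (by positivity) x ξ
    _ ≤ √(8 * t) / (2 * t) * exp (R ^ 2 / (8 * t)) * exp (-ξ ^ 2 / (16 * t)) := by
        rw [show 2 * (8 * t) = 16 * t by ring, mul_assoc]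
        gcongr

def dirichletHeatKernel (t x ξ : ℝ) : ℝ :=
  1 / (2 * √(π * t)) * (gauss t (x - ξ) - gauss t (x + ξ))

def dirichletHeatKernelDeriv (t x ξ : ℝ) : ℝ :=
  1 / (2 * √(π * t)) * (gaussDeriv t (x - ξ) - gaussDeriv t (x + ξ))

lemma continuous_uncurry_dirichletHeatKernel (t : ℝ) :
    Continuous (Function.uncurry (dirichletHeatKernel t)) := by
  unfold dirichletHeatKernel
  fun_prop

lemma continuous_uncurry_dirichletHeatKernelDeriv (t : ℝ) :
    Continuous (Function.uncurry (dirichletHeatKernelDeriv t)) := by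
  unfold dirichletHeatKernelDeriv
  fun_prop

lemma hasDerivAt_dirichletHeatKernel (t x ξ : ℝ) :
    HasDerivAt (dirichletHeatKernel t · ξ) (dirichletHeatKernelDeriv t x ξ) x := by
  have h_sub := (hasDerivAt_gauss t (x - ξ)).comp x ((hasDerivAt_id x).sub_const ξ)
  have h_add := (hasDerivAt_gauss t (x + ξ)).comp x ((hasDerivAt_id x).add_const ξ)
  have h := (h_sub.sub h_add).const_mul (1 / (2 * √(π * t)))
  rwa [mul_one, mul_one] at h

lemma integrable_dirichletHeatKernel {t : ℝ} (ht : 0 < t) (x : ℝ) :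
    Integrable (dirichletHeatKernel t x) :=
  have h_gauss : Integrable (gauss t) := integrable_exp_neg_sq_div (by positivity)
  ((h_gauss.comp_sub_left x).sub (h_gauss.comp_add_left x)).const_mul _

lemma exists_abs_dirichletHeatKernelDeriv_le {t : ℝ} (ht : 0 < t) (R : ℝ) :
    ∃ C, ∀ x, |x| ≤ R → ∀ ξ, |dirichletHeatKernelDeriv t x ξ| ≤ C * exp (-ξ ^ 2 / (16 * t)) := by
  obtain ⟨C, hC⟩ := exists_abs_gaussDeriv_sub_le ht R
  refine ⟨1 / (2 * √(π * t)) * (2 * C), fun x hx ξ ↦ ?_⟩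
  have h_add : |gaussDeriv t (x + ξ)| ≤ C * exp (-ξ ^ 2 / (16 * t)) := by
    simpa only [sub_neg_eq_add, even_two, Even.neg_pow] using hC x hx (-ξ)
  calc |dirichletHeatKernelDeriv t x ξ|
      ≤ 1 / (2 * √(π * t)) * (|gaussDeriv t (x - ξ)| + |gaussDeriv t (x + ξ)|) := by
        rw [dirichletHeatKernelDeriv, abs_mul, abs_of_pos (by positivity)]
        gcongr
        exact abs_sub _ _
    _ ≤ 1 / (2 * √(π * t)) * (C * exp (-ξ ^ 2 / (16 * t)) + C * exp (-ξ ^ 2 / (16 * t))) := by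
        gcongr
        exact hC x hx ξ
    _ = 1 / (2 * √(π * t)) * (2 * C) * exp (-ξ ^ 2 / (16 * t)) := by ring

lemma dirichletHeatKernelDeriv_zero {t : ℝ} (ht : 0 < t) (ξ : ℝ) :
    dirichletHeatKernelDeriv t 0 ξ = ξ / (2 * √(π * t ^ 3)) * exp (-ξ ^ 2 / (4 * t)) := by
  have h_sqrt : √(π * t ^ 3) = √(π * t) * t := by
    rw [show π * t ^ 3 = π * t * t ^ 2 by ring, sqrt_mul (by positivity), sqrt_sq ht.le]
  simp only [dirichletHeatKernelDeriv, gaussDeriv, gauss, h_sqrt, zero_sub, zero_add, even_two,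
    Even.neg_pow]
  field_simp
  ring

theorem tendsto_deriv_integral_mul_dirichletHeatKernel {t : ℝ} (ht : 0 < t) (x₀ : ℝ) {s : Set ℝ}
    {φ : ℝ → ℝ} {M : ℝ} (hφ_meas : AEStronglyMeasurable φ (volume.restrict s))
    (hφ_bdd : ∀ᵐ ξ ∂volume.restrict s, ‖φ ξ‖ ≤ M) :
    Tendsto (fun x ↦ deriv (fun x' ↦ ∫ ξ in s, φ ξ * dirichletHeatKernel t x' ξ) x) (𝓝 x₀)
      (𝓝 (∫ ξ in s, φ ξ * dirichletHeatKernelDeriv t x₀ ξ)) := by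
  obtain ⟨C, hC⟩ := exists_abs_dirichletHeatKernelDeriv_le ht (|x₀| + 1)
  have h_near : ∀ x ∈ Metric.closedBall x₀ 1, |x| ≤ |x₀| + 1 := fun x hx ↦ by
    have := abs_sub_abs_le_abs_sub x x₀
    rw [Metric.mem_closedBall, Real.dist_eq] at hx
    linarith
  refine tendsto_deriv_integral_of_dominated (Metric.closedBall_mem_nhds x₀ one_pos)
    (F := fun x ξ ↦ φ ξ * dirichletHeatKernel t x ξ)
    (F' := fun x ξ ↦ φ ξ * dirichletHeatKernelDeriv t x ξ)
    (bound := fun ξ ↦ M * (C * exp (-ξ ^ 2 / (16 * t))))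
    (.of_forall fun x ↦ hφ_meas.mul
      ((continuous_uncurry_dirichletHeatKernel t).uncurry_left x).aestronglyMeasurable)
    (.of_forall fun x ↦ (integrable_dirichletHeatKernel ht x).restrict.bdd_mul hφ_meas hφ_bdd)
    (.of_forall fun x ↦ hφ_meas.mul
      ((continuous_uncurry_dirichletHeatKernelDeriv t).uncurry_left x).aestronglyMeasurable)
    (hφ_bdd.mono fun ξ hξ x hx ↦ ?_)
    (((integrable_exp_neg_sq_div (by positivity)).const_mul C).const_mul M).restrict
    (.of_forall fun ξ x _ ↦ (hasDerivAt_dirichletHeatKernel t x ξ).const_mul (φ ξ))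
    (.of_forall fun ξ ↦
      ((continuous_uncurry_dirichletHeatKernelDeriv t).uncurry_right ξ).continuousAt.const_mul _)
  rw [norm_mul]
  exact mul_le_mul hξ (hC x (h_near x hx) ξ) (norm_nonneg _) ((norm_nonneg _).trans hξ)

end DirichletHeatKernel

theorem stmt12 (t : ℝ) (ht : 0 < t) (φ : ℝ → ℝ) (hm : Measurable φ)
    (M : ℝ) (hbdd : ∀ ξ ∈ Set.Ioi (0:ℝ), |φ ξ| ≤ M) :
    Tendsto (fun x : ℝ =>
        deriv (fun x' : ℝ =>
          ∫ ξ in Set.Ioi (0:ℝ), φ ξ *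
            ((1 / (2 * Real.sqrt (π * t))) *
              (Real.exp (-(x' - ξ) ^ 2 / (4 * t)) - Real.exp (-(x' + ξ) ^ 2 / (4 * t))))) x)
      (𝓝[>] 0)
      (𝓝 (∫ ξ in Set.Ioi (0:ℝ),
        φ ξ * ((ξ / (2 * Real.sqrt (π * t ^ 3))) * Real.exp (-ξ ^ 2 / (4 * t))))) := by
  have h_lim := tendsto_deriv_integral_mul_dirichletHeatKernel ht 0 hm.aestronglyMeasurable
    (ae_restrict_of_forall_mem measurableSet_Ioi hbdd)
  simp only [dirichletHeatKernelDeriv_zero ht] at h_lim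
  exact h_lim.mono_left nhdsWithin_le_nhds
end

section
/- Let s > 0. Then the Laplace transform in t of the function t ↦ e^{-ξ²/(4t)}/√(πt) (for ξ > 0) equals e^{-ξ√s}/√s, i.e., ∫₀^∞ e^{-st} · e^{-ξ²/(4t)}/√(πt) dt = e^{-ξ√s}/√s. -/
/-!
After `t = u²` the integral becomes `(2/√π) ∫₀^∞ exp (-(a u² + b / u²)) du` with `a = s`,
`b = ξ² / 4`. For `p = √a`, `q = √b` the exponent is `-(p u - q / u)² - 2 p q`, and
`w = p u - q / u` maps `(0, ∞)` bijectively onto `ℝ` with `dw = (p + q / u²) du`, so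
`∫ (p + q / u²) exp (-(a u² + b / u²)) du = e^{-2pq} √π`. The inversion `u ↦ (q / p) / u`
preserves the integrand and shows that the `q / u²` part contributes as much as the `p` part,
whence `2 p ∫ exp (-(a u² + b / u²)) du = e^{-2pq} √π`.
-/

open Real MeasureTheory Set

variable {E : Type*} [NormedAddCommGroup E] [NormedSpace ℝ E]

lemma strictMonoOn_mul_sub_div {p q : ℝ} (hp : 0 < p) (hq : 0 ≤ q) :
    StrictMonoOn (fun u => p * u - q / u) (Ioi 0) := by
  intro u hu v _ huv
  have := div_le_div_of_nonneg_left hq hu huv.le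
  dsimp only
  nlinarith

lemma image_mul_sub_div_Ioi {p q : ℝ} (hp : 0 < p) (hq : 0 < q) :
    (fun u => p * u - q / u) '' Ioi 0 = univ := by
  refine eq_univ_of_forall fun w => ?_
  set S := √(w ^ 2 + 4 * p * q)
  have hS : S ^ 2 = w ^ 2 + 4 * p * q := sq_sqrt (by positivity)
  have hwS : 0 < w + S := by
    have : |w| < S := by rw [← sqrt_sq_eq_abs]; exact sqrt_lt_sqrt (sq_nonneg w) (by nlinarith)
    linarith [neg_abs_le w]
  refine ⟨(w + S) / (2 * p), div_pos hwS (by positivity), ?_⟩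
  field_simp
  nlinarith

lemma hasDerivAt_mul_sub_div (p q : ℝ) {u : ℝ} (hu : u ≠ 0) :
    HasDerivAt (fun u => p * u - q / u) (p + q / u ^ 2) u := by
  simpa only [div_eq_mul_inv, mul_one, mul_neg, sub_neg_eq_add] using
    ((hasDerivAt_id' u).const_mul p).fun_sub ((hasDerivAt_inv hu).const_mul q)

lemma hasDerivAt_const_div (c : ℝ) {u : ℝ} (hu : u ≠ 0) :
    HasDerivAt (fun u => c / u) (-(c / u ^ 2)) u := by
  simpa [div_eq_mul_inv] using (hasDerivAt_inv hu).const_mul c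

theorem integral_comp_mul_sub_div_Ioi (f : ℝ → E) {p q : ℝ} (hp : 0 < p) (hq : 0 < q) :
    ∫ u in Ioi 0, (p + q / u ^ 2) • f (p * u - q / u) = ∫ w, f w := by
  conv_rhs => rw [← setIntegral_univ, ← image_mul_sub_div_Ioi hp hq]
  rw [integral_image_eq_integral_abs_deriv_smul measurableSet_Ioi
      (fun u hu => (hasDerivAt_mul_sub_div p q (ne_of_gt hu)).hasDerivWithinAt)
      (strictMonoOn_mul_sub_div hp hq.le).injOn]
  refine setIntegral_congr_fun measurableSet_Ioi fun u hu => ?_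
  have : (0:ℝ) < u := hu
  rw [abs_of_pos (by positivity)]

lemma image_const_div_Ioi {c : ℝ} (hc : 0 < c) : (fun u => c / u) '' Ioi 0 = Ioi 0 := by
  ext y
  refine ⟨?_, fun hy => ⟨c / y, div_pos hc hy, div_div_cancel₀ hc.ne'⟩⟩
  rintro ⟨u, hu, rfl⟩
  exact div_pos hc hu

lemma strictAntiOn_const_div {c : ℝ} (hc : 0 < c) : StrictAntiOn (fun u => c / u) (Ioi 0) :=
  fun _ hu _ _ huv => div_lt_div_of_pos_left hc hu huv

theorem integral_comp_const_div_Ioi (f : ℝ → E) {c : ℝ} (hc : 0 < c) :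
    ∫ u in Ioi 0, (c / u ^ 2) • f (c / u) = ∫ u in Ioi 0, f u := by
  conv_rhs => rw [← image_const_div_Ioi hc]
  rw [integral_image_eq_integral_abs_deriv_smul measurableSet_Ioi
      (fun u hu => (hasDerivAt_const_div c (ne_of_gt hu)).hasDerivWithinAt)
      (strictAntiOn_const_div hc).injOn]
  refine setIntegral_congr_fun measurableSet_Ioi fun u hu => ?_
  have : (0:ℝ) < u := hu
  rw [abs_neg, abs_of_pos (by positivity)]

theorem integrableOn_comp_const_div_Ioi_iff (f : ℝ → E) {c : ℝ} (hc : 0 < c) :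
    IntegrableOn (fun u => (c / u ^ 2) • f (c / u)) (Ioi 0) ↔ IntegrableOn f (Ioi 0) := by
  conv_rhs => rw [← image_const_div_Ioi hc]
  rw [integrableOn_image_iff_integrableOn_abs_deriv_smul measurableSet_Ioi
      (fun u hu => (hasDerivAt_const_div c (ne_of_gt hu)).hasDerivWithinAt)
      (strictAntiOn_const_div hc).injOn]
  refine integrableOn_congr_fun (fun u hu => ?_) measurableSet_Ioi
  have : (0:ℝ) < u := hu
  simp only [abs_neg, abs_of_pos (show 0 < c / u ^ 2 by positivity)]

theorem integral_comp_sq_Ioi (f : ℝ → E) :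
    ∫ u in Ioi 0, (2 * u) • f (u ^ 2) = ∫ t in Ioi 0, f t := by
  rw [← integral_comp_rpow_Ioi_of_pos (g := f) two_pos]
  refine setIntegral_congr_fun measurableSet_Ioi fun u _ => ?_
  norm_num

theorem integral_exp_neg_mul_sq_add_div_sq {a b : ℝ} (ha : 0 < a) (hb : 0 < b) :
    ∫ u in Ioi 0, exp (-(a * u ^ 2 + b / u ^ 2)) = √π / (2 * √a) * exp (-2 * √(a * b)) := by
  set F : ℝ → ℝ := fun u => exp (-(a * u ^ 2 + b / u ^ 2))
  set p := √a
  set q := √b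
  have hp : 0 < p := sqrt_pos.mpr ha
  have hq : 0 < q := sqrt_pos.mpr hb
  have ha_sq : a = p ^ 2 := (sq_sqrt ha.le).symm
  have hb_sq : b = q ^ 2 := (sq_sqrt hb.le).symm
  have hpq : √(a * b) = p * q := sqrt_mul ha.le b
  have hF_int : IntegrableOn F (Ioi 0) := by
    refine (integrable_exp_neg_mul_sq ha).integrableOn.mono' (by fun_prop) ?_
    filter_upwards [ae_restrict_mem measurableSet_Ioi] with u hu
    rw [norm_of_nonneg (exp_pos _).le, exp_le_exp]
    have : 0 ≤ b / u ^ 2 := by positivity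
    linarith
  set c := q / p
  have hc : 0 < c := div_pos hq hp
  have hF_div : ∀ u ∈ Ioi (0:ℝ), (q / u ^ 2) * F u = p * ((c / u ^ 2) • F (c / u)) := by
    intro u hu
    have : (0:ℝ) < u := hu
    simp only [F, c, smul_eq_mul, ha_sq, hb_sq]
    field_simp
    ring_nf
  have hG_int : IntegrableOn (fun u => (q / u ^ 2) * F u) (Ioi 0) :=
    IntegrableOn.congr_fun (((integrableOn_comp_const_div_Ioi_iff F hc).mpr hF_int).const_mul p)
      (fun u hu => (hF_div u hu).symm) measurableSet_Ioi
  have hG : ∫ u in Ioi 0, (q / u ^ 2) * F u = p * ∫ u in Ioi 0, F u := by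
    rw [setIntegral_congr_fun measurableSet_Ioi hF_div, integral_const_mul,
      integral_comp_const_div_Ioi F hc]
  have hgauss : exp (2 * (p * q)) * ((p * ∫ u in Ioi 0, F u) + ∫ u in Ioi 0, (q / u ^ 2) * F u)
      = √π := by
    rw [← integral_const_mul, ← integral_add (hF_int.const_mul p) hG_int, ← integral_const_mul]
    have := integral_comp_mul_sub_div_Ioi (fun w => exp (-w ^ 2)) hp hq
    rw [show (∫ w, exp (-w ^ 2)) = √π by simpa using integral_gaussian 1] at this
    rw [← this]
    refine setIntegral_congr_fun measurableSet_Ioi fun u hu => ?_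
    have : (0:ℝ) < u := hu
    have hsq : -(p * u - q / u) ^ 2 = 2 * (p * q) + -(a * u ^ 2 + b / u ^ 2) := by
      rw [ha_sq, hb_sq]
      field_simp
      ring
    simp only [F, smul_eq_mul, hsq, exp_add]
    ring
  rw [hG, ← hpq] at hgauss
  rw [← hgauss, neg_mul, exp_neg]
  field_simp
  ring

theorem stmt14 (s ξ : ℝ) (hs : 0 < s) (hξ : 0 < ξ) :
    ∫ t in Set.Ioi (0:ℝ),
        Real.exp (-s * t) * (Real.exp (-ξ ^ 2 / (4 * t)) / Real.sqrt (π * t))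
      = Real.exp (-ξ * Real.sqrt s) / Real.sqrt s := by
  have hsqrt : √(s * (ξ ^ 2 / 4)) = √s * (ξ / 2) := by
    rw [sqrt_mul hs.le, show ξ ^ 2 / 4 = (ξ / 2) ^ 2 by ring, sqrt_sq (by positivity)]
  rw [← integral_comp_sq_Ioi]
  calc ∫ u in Ioi 0, (2 * u) • (exp (-s * u ^ 2) * (exp (-ξ ^ 2 / (4 * u ^ 2)) / √(π * u ^ 2)))
      = ∫ u in Ioi 0, 2 / √π * exp (-(s * u ^ 2 + (ξ ^ 2 / 4) / u ^ 2)) := by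
        refine setIntegral_congr_fun measurableSet_Ioi fun u hu => ?_
        have hu : (0:ℝ) < u := hu
        rw [sqrt_mul pi_pos.le, sqrt_sq hu.le, smul_eq_mul, neg_add, exp_add]
        field_simp
    _ = exp (-ξ * √s) / √s := by
        rw [integral_const_mul, integral_exp_neg_mul_sq_add_div_sq hs (by positivity), hsqrt]
        field_simp
end

section
/- For q < 1/2 and fixed t > 0, writing σ = ε^{1-2q}, the boundary flux of the solution satisfies ∂_y p(t,0⁺;ε) = ∫₀^∞ (√σ (p₀(ξ) - p₀(-√σ ξ))/(1+√σ)) · (ξ/(2√(πt³))) e^{-ξ²/(4t)} dξ, and consequently |∂_y p(t,0⁺;ε)| ≤ 2‖p₀‖_∞ · (√σ/(1+√σ)) · ∫₀^∞ (ξ/(2√(πt³))) e^{-ξ²/(4t)} dξ = 2‖p₀‖_∞ √σ/((1+√σ)√(πt)) = O(ε^{1/2 - q}) as ε → 0⁺. -/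
open Real MeasureTheory intervalIntegral

/-!
Subtracting the Abel identity from the flux identity leaves `p₀` minus the average
`(p₀(ξ) + √σ p₀(-√σ ξ)) / (1 + √σ)`, which is `√σ (p₀(ξ) - p₀(-√σ ξ)) / (1 + √σ)`.
This factor is bounded by `2 ‖p₀‖_∞ √σ / (1 + √σ)`, and the flux kernel
`ξ e^{-ξ²/(4t)} / (2 √(π t³))` is nonnegative with total mass `1 / √(π t)` on `(0, ∞)`;
finally `√σ = ε^{1/2 - q}`.
-/

theorem integral_Ioi_mul_exp_neg_mul_sq {b : ℝ} (hb : 0 < b) :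
    ∫ x in Set.Ioi (0 : ℝ), x * exp (-b * x ^ 2) = (2 * b)⁻¹ := by
  have h := integral_mul_cexp_neg_mul_sq (b := (b : ℂ)) (by simpa using hb)
  have hcast : ∀ x : ℝ, (x : ℂ) * Complex.exp (-(b : ℂ) * (x : ℂ) ^ 2)
      = ((x * exp (-b * x ^ 2) : ℝ) : ℂ) := fun x => by push_cast; ring_nf
  simp only [hcast, integral_complex_ofReal] at h
  exact_mod_cast h

noncomputable def heatFluxKernel (t ξ : ℝ) : ℝ :=
  ξ / (2 * √(π * t ^ 3)) * exp (-ξ ^ 2 / (4 * t))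

theorem heatFluxKernel_eq (t ξ : ℝ) :
    heatFluxKernel t ξ = (2 * √(π * t ^ 3))⁻¹ * (ξ * exp (-(4 * t)⁻¹ * ξ ^ 2)) := by
  rw [heatFluxKernel, neg_div, div_eq_inv_mul (ξ ^ 2), neg_mul]
  ring

theorem heatFluxKernel_nonneg (t : ℝ) {ξ : ℝ} (hξ : 0 ≤ ξ) : 0 ≤ heatFluxKernel t ξ := by
  unfold heatFluxKernel
  positivity

theorem integrable_heatFluxKernel {t : ℝ} (ht : 0 < t) : Integrable (heatFluxKernel t) := by
  simp only [funext (heatFluxKernel_eq t)]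
  exact (integrable_mul_exp_neg_mul_sq (by positivity)).const_mul _

theorem integral_Ioi_heatFluxKernel {t : ℝ} (ht : 0 < t) :
    ∫ ξ in Set.Ioi (0 : ℝ), heatFluxKernel t ξ = (√(π * t))⁻¹ := by
  have hsqrt : √(π * t ^ 3) = √(π * t) * t := by
    rw [show π * t ^ 3 = π * t * t ^ 2 by ring, sqrt_mul (by positivity), sqrt_sq ht.le]
  have hπt : 0 < √(π * t) := sqrt_pos.mpr (by positivity)
  simp only [heatFluxKernel_eq, MeasureTheory.integral_const_mul, integral_Ioi_mul_exp_neg_mul_sq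
    (inv_pos.mpr (by positivity : 0 < 4 * t)), hsqrt]
  field_simp
  ring

theorem abs_integral_mul_le_mul_integral {α : Type*} [MeasurableSpace α] {μ : Measure α}
    {f g : α → ℝ} {C : ℝ} (hg : Integrable g μ) (hg0 : 0 ≤ᵐ[μ] g)
    (hfC : ∀ᵐ x ∂μ, |f x| ≤ C) :
    |∫ x, f x * g x ∂μ| ≤ C * ∫ x, g x ∂μ := by
  rw [← MeasureTheory.integral_const_mul, ← Real.norm_eq_abs]
  refine norm_integral_le_of_norm_le (hg.const_mul C) ?_
  filter_upwards [hg0, hfC] with x hgx hfx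
  rw [norm_mul, Real.norm_eq_abs, Real.norm_eq_abs, abs_of_nonneg hgx]
  exact mul_le_mul_of_nonneg_right hfx hgx

theorem abs_setIntegral_mul_heatFluxKernel_le {φ : ℝ → ℝ} {C t : ℝ} (ht : 0 < t)
    (hφC : ∀ ξ, |φ ξ| ≤ C) :
    |∫ ξ in Set.Ioi (0 : ℝ), φ ξ * heatFluxKernel t ξ| ≤ C / √(π * t) := by
  have hk0 : 0 ≤ᵐ[volume.restrict (Set.Ioi 0)] heatFluxKernel t := by
    filter_upwards [ae_restrict_mem measurableSet_Ioi] with ξ hξ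
    exact heatFluxKernel_nonneg t (le_of_lt hξ)
  have h := abs_integral_mul_le_mul_integral (integrable_heatFluxKernel ht).integrableOn hk0
    (.of_forall hφC)
  rwa [integral_Ioi_heatFluxKernel ht, ← div_eq_mul_inv] at h

theorem integral_mul_sub_integral_average_mul {α : Type*} [MeasurableSpace α] {μ : Measure α}
    {f g k : α → ℝ} {s : ℝ} (hs : 1 + s ≠ 0)
    (hf : Integrable (fun x => f x * k x) μ) (hg : Integrable (fun x => g x * k x) μ) :
    ∫ x, f x * k x ∂μ - ∫ x, (f x + s * g x) / (1 + s) * k x ∂μ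
      = ∫ x, s * (f x - g x) / (1 + s) * k x ∂μ := by
  have hav : Integrable (fun x => (f x + s * g x) / (1 + s) * k x) μ :=
    ((hf.add (hg.const_mul s)).div_const (1 + s)).congr
      (.of_forall fun x => by simp only [Pi.add_apply]; ring)
  rw [← integral_sub hf hav]
  congr 1 with x
  field_simp
  ring

theorem setIntegral_mul_heatFluxKernel_sub_average {p₀ : ℝ → ℝ} {M t : ℝ} (ht : 0 < t)
    (hp₀ : Measurable p₀) (hp₀M : ∀ x, |p₀ x| ≤ M) {s : ℝ} (hs : 0 ≤ s) :
    (∫ ξ in Set.Ioi (0 : ℝ), p₀ ξ * ξ / (2 * √(π * t ^ 3)) * exp (-ξ ^ 2 / (4 * t)))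
      - ∫ ξ in Set.Ioi (0 : ℝ), (p₀ ξ + s * p₀ (-s * ξ)) / (1 + s) * heatFluxKernel t ξ
      = ∫ ξ in Set.Ioi (0 : ℝ), s * (p₀ ξ - p₀ (-s * ξ)) / (1 + s) * heatFluxKernel t ξ := by
  have hint : ∀ {φ : ℝ → ℝ}, Measurable φ → (∀ x, |φ x| ≤ M) →
      IntegrableOn (fun ξ => φ ξ * heatFluxKernel t ξ) (Set.Ioi 0) := fun hφ hφM =>
    ((integrable_heatFluxKernel ht).bdd_mul hφ.aestronglyMeasurable (.of_forall hφM)).integrableOn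
  have hfirst : ∫ ξ in Set.Ioi (0 : ℝ), p₀ ξ * ξ / (2 * √(π * t ^ 3)) * exp (-ξ ^ 2 / (4 * t))
      = ∫ ξ in Set.Ioi (0 : ℝ), p₀ ξ * heatFluxKernel t ξ := by
    congr 1 with ξ
    rw [heatFluxKernel]
    ring
  rw [hfirst]
  exact integral_mul_sub_integral_average_mul (by positivity) (hint hp₀ hp₀M)
    (hint (hp₀.comp (measurable_const_mul _)) fun _ => hp₀M _)

theorem abs_mul_sub_div_one_add_le {a b s M : ℝ} (hs : 0 ≤ s) (ha : |a| ≤ M) (hb : |b| ≤ M) :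
    |s * (a - b) / (1 + s)| ≤ 2 * M * s / (1 + s) := by
  have h1s : 0 < 1 + s := by linarith
  rw [abs_div, abs_of_pos h1s, abs_mul, abs_of_nonneg hs]
  have hab : |a - b| ≤ 2 * M := by linarith [abs_sub a b]
  gcongr ?_ / _
  nlinarith

theorem sqrt_rpow_one_sub_two_mul {ε : ℝ} (hε : 0 ≤ ε) (q : ℝ) :
    √(ε ^ (1 - 2 * q)) = ε ^ (1 / 2 - q) := by
  rw [sqrt_eq_rpow, ← rpow_mul hε]
  ring_nf

theorem stmt18_general (q t : ℝ) (ht : 0 < t)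
    (p0 : ℝ → ℝ) (hm : Measurable p0) (M : ℝ) (hbdd : ∀ x, |p0 x| ≤ M)
    (h : ℝ → ℝ → ℝ) (flux : ℝ → ℝ)
    (hflux : ∀ ε > (0:ℝ), flux ε =
        (∫ ξ in Set.Ioi (0:ℝ), p0 ξ * ξ / (2 * Real.sqrt (π * t ^ 3)) * Real.exp (-ξ ^ 2 / (4 * t)))
        - (∫ τ in (0:ℝ)..t, deriv (h ε) τ / Real.sqrt (π * (t - τ)))
        - h ε 0 / Real.sqrt (π * t))
    (hAbel : ∀ ε > (0:ℝ),
        (∫ τ in (0:ℝ)..t, deriv (h ε) τ / Real.sqrt (π * (t - τ))) + h ε 0 / Real.sqrt (π * t)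
          = ∫ ξ in Set.Ioi (0:ℝ),
              ((p0 ξ + Real.sqrt (ε ^ (1 - 2 * q)) * p0 (-Real.sqrt (ε ^ (1 - 2 * q)) * ξ)) /
                  (1 + Real.sqrt (ε ^ (1 - 2 * q)))) *
                (ξ / (2 * Real.sqrt (π * t ^ 3)) * Real.exp (-ξ ^ 2 / (4 * t)))) :
    (∀ ε > (0:ℝ), flux ε =
        ∫ ξ in Set.Ioi (0:ℝ),
          (Real.sqrt (ε ^ (1 - 2 * q)) * (p0 ξ - p0 (-Real.sqrt (ε ^ (1 - 2 * q)) * ξ)) /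
              (1 + Real.sqrt (ε ^ (1 - 2 * q)))) *
            (ξ / (2 * Real.sqrt (π * t ^ 3)) * Real.exp (-ξ ^ 2 / (4 * t)))) ∧
    (∀ ε > (0:ℝ), |flux ε| ≤
        2 * M * Real.sqrt (ε ^ (1 - 2 * q)) /
          ((1 + Real.sqrt (ε ^ (1 - 2 * q))) * Real.sqrt (π * t))) ∧
    (∃ C ε₀ : ℝ, 0 < C ∧ 0 < ε₀ ∧ ∀ ε : ℝ, 0 < ε → ε < ε₀ →
        |flux ε| ≤ C * ε ^ (1 / 2 - q)) := by
  have hM : 0 ≤ M := (abs_nonneg _).trans (hbdd 0)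
  have hflux' : ∀ ε > (0:ℝ), flux ε = ∫ ξ in Set.Ioi (0:ℝ),
      (√(ε ^ (1 - 2 * q)) * (p0 ξ - p0 (-√(ε ^ (1 - 2 * q)) * ξ)) / (1 + √(ε ^ (1 - 2 * q))))
        * heatFluxKernel t ξ := fun ε hε => by
    rw [hflux ε hε, sub_sub, hAbel ε hε]
    exact setIntegral_mul_heatFluxKernel_sub_average ht hm hbdd (sqrt_nonneg _)
  have hbound : ∀ ε > (0:ℝ), |flux ε| ≤ 2 * M * √(ε ^ (1 - 2 * q)) /
      ((1 + √(ε ^ (1 - 2 * q))) * √(π * t)) := fun ε hε => by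
    rw [hflux' ε hε, ← div_div]
    exact abs_setIntegral_mul_heatFluxKernel_le ht fun ξ =>
      abs_mul_sub_div_one_add_le (sqrt_nonneg _) (hbdd _) (hbdd _)
  refine ⟨hflux', hbound, 2 * M / √(π * t) + 1, 1, by positivity, one_pos, fun ε hε _ => ?_⟩
  set s := √(ε ^ (1 - 2 * q))
  have hs : 0 ≤ s := sqrt_nonneg _
  calc |flux ε| ≤ 2 * M * s / ((1 + s) * √(π * t)) := hbound ε hε
    _ = 2 * M / √(π * t) * (s / (1 + s)) := by rw [← div_div]; ring
    _ ≤ 2 * M / √(π * t) * s := by gcongr; exact div_le_self hs (by linarith)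
    _ ≤ (2 * M / √(π * t) + 1) * ε ^ (1 / 2 - q) := by
      rw [← sqrt_rpow_one_sub_two_mul hε.le]
      gcongr
      linarith

theorem stmt18 (q t : ℝ) (hq : q < 1 / 2) (ht : 0 < t)
    (p0 : ℝ → ℝ) (hm : Measurable p0) (M : ℝ) (hM : 0 ≤ M) (hbdd : ∀ x, |p0 x| ≤ M)
    (h : ℝ → ℝ → ℝ) (flux : ℝ → ℝ)
    (hflux : ∀ ε > (0:ℝ), flux ε =
        (∫ ξ in Set.Ioi (0:ℝ), p0 ξ * ξ / (2 * Real.sqrt (π * t ^ 3)) * Real.exp (-ξ ^ 2 / (4 * t)))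
        - (∫ τ in (0:ℝ)..t, deriv (h ε) τ / Real.sqrt (π * (t - τ)))
        - h ε 0 / Real.sqrt (π * t))
    (hAbel : ∀ ε > (0:ℝ),
        (∫ τ in (0:ℝ)..t, deriv (h ε) τ / Real.sqrt (π * (t - τ))) + h ε 0 / Real.sqrt (π * t)
          = ∫ ξ in Set.Ioi (0:ℝ),
              ((p0 ξ + Real.sqrt (ε ^ (1 - 2 * q)) * p0 (-Real.sqrt (ε ^ (1 - 2 * q)) * ξ)) /
                  (1 + Real.sqrt (ε ^ (1 - 2 * q)))) *
                (ξ / (2 * Real.sqrt (π * t ^ 3)) * Real.exp (-ξ ^ 2 / (4 * t)))) :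
    (∀ ε > (0:ℝ), flux ε =
        ∫ ξ in Set.Ioi (0:ℝ),
          (Real.sqrt (ε ^ (1 - 2 * q)) * (p0 ξ - p0 (-Real.sqrt (ε ^ (1 - 2 * q)) * ξ)) /
              (1 + Real.sqrt (ε ^ (1 - 2 * q)))) *
            (ξ / (2 * Real.sqrt (π * t ^ 3)) * Real.exp (-ξ ^ 2 / (4 * t)))) ∧
    (∀ ε > (0:ℝ), |flux ε| ≤
        2 * M * Real.sqrt (ε ^ (1 - 2 * q)) /
          ((1 + Real.sqrt (ε ^ (1 - 2 * q))) * Real.sqrt (π * t))) ∧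
    (∃ C ε₀ : ℝ, 0 < C ∧ 0 < ε₀ ∧ ∀ ε : ℝ, 0 < ε → ε < ε₀ →
        |flux ε| ≤ C * ε ^ (1 / 2 - q)) :=
  stmt18_general q t ht p0 hm M hbdd h flux hflux hAbel
end
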